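/- arXiv:2103.07145 — 3 statements merged into one kernel-verified Lean document; each statement's English description precedes it below -/
import Mathlib

section
/- Suppose x ∈ ℝ^N is nonzero, block k-sparse, and q ∈ (1,∞). If k < inf over nonzero h in ker(A) of 3^{q/(1-q)} k_q(h), then x is the unique minimizer of ‖z‖_{2,1}/‖z‖_{2,q} over all z with Az = Ax. -/
noncomputable section

/-- The mixed ℓ2/ℓ1 norm of a block-partitioned vector. -/
def norm21 {M d : ℕ} (z : Fin M → EuclideanSpace ℝ (Fin d)) : ℝ := ∑ j, ‖z j‖

/-- The mixed ℓ2/ℓq norm of a block-partitioned vector. -/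
def norm2q {M d : ℕ} (q : ℝ) (z : Fin M → EuclideanSpace ℝ (Fin d)) : ℝ :=
  (∑ j, ‖z j‖ ^ q) ^ (1 / q)

/-- The mixed ℓ2/ℓ∞ norm of a block-partitioned vector. -/
def norm2inf {M d : ℕ} (z : Fin M → EuclideanSpace ℝ (Fin d)) : ℝ := ⨆ j, ‖z j‖

/-- The block q-ratio sparsity. -/
def kqs {M d : ℕ} (q : ℝ) (z : Fin M → EuclideanSpace ℝ (Fin d)) : ℝ :=
  (norm21 z / norm2q q z) ^ (q / (q - 1))

/-- The block support of a block-partitioned vector. -/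
def blockSupport {M d : ℕ} (z : Fin M → EuclideanSpace ℝ (Fin d)) : Finset (Fin M) :=
  letI := Classical.decPred fun j : Fin M => z j ≠ 0
  Finset.univ.filter fun j => z j ≠ 0

/-- Restriction of a block-partitioned vector to a set of blocks. -/
def restrictS {M d : ℕ} (S : Finset (Fin M)) (z : Fin M → EuclideanSpace ℝ (Fin d)) :
    Fin M → EuclideanSpace ℝ (Fin d) := fun j => if j ∈ S then z j else 0

/-- Matrix action on a block-partitioned vector. -/
def mulB {m M d : ℕ} (A : Matrix (Fin m) (Fin M × Fin d) ℝ)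
    (x : Fin M → EuclideanSpace ℝ (Fin d)) : EuclideanSpace ℝ (Fin m) :=
  WithLp.toLp 2 (fun i => ∑ p : Fin M × Fin d, A i p * x p.1 p.2)

/-- Transpose matrix action, producing a block-partitioned vector. -/
def mulBt {m M d : ℕ} (A : Matrix (Fin m) (Fin M × Fin d) ℝ)
    (w : EuclideanSpace ℝ (Fin m)) : Fin M → EuclideanSpace ℝ (Fin d) :=
  fun j => WithLp.toLp 2 (fun l => ∑ i, A i (j, l) * w i)

/-- The q-ratio block constrained minimal singular value (BCMSV). -/
def bcmsv {m M d : ℕ} (q s : ℝ) (A : Matrix (Fin m) (Fin M × Fin d) ℝ) : ℝ :=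
  sInf {t : ℝ | ∃ z : Fin M → EuclideanSpace ℝ (Fin d),
    z ≠ 0 ∧ kqs q z ≤ s ∧ t = ‖mulB A z‖ / norm2q q z}

end

section MainProof

open Finset Real

lemma norm21_nonneg' {M d : ℕ} (z : Fin M → EuclideanSpace ℝ (Fin d)) : 0 ≤ norm21 z :=
  Finset.sum_nonneg fun _ _ => norm_nonneg _

lemma norm2q_nonneg' {M d : ℕ} (q : ℝ) (z : Fin M → EuclideanSpace ℝ (Fin d)) :
    0 ≤ norm2q q z :=
  Real.rpow_nonneg (Finset.sum_nonneg fun _ _ => Real.rpow_nonneg (norm_nonneg _) _) _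

lemma kqs_nonneg' {M d : ℕ} (q : ℝ) (z : Fin M → EuclideanSpace ℝ (Fin d)) : 0 ≤ kqs q z :=
  Real.rpow_nonneg (div_nonneg (norm21_nonneg' z) (norm2q_nonneg' q z)) _

lemma norm2q_pos' {M d : ℕ} {q : ℝ} (hq : 0 < q) {z : Fin M → EuclideanSpace ℝ (Fin d)}
    (hz : z ≠ 0) : 0 < norm2q q z := by
  obtain ⟨j, hj⟩ := Function.ne_iff.mp hz
  have hzj : (0:ℝ) < ‖z j‖ ^ q := Real.rpow_pos_of_pos (norm_pos_iff.mpr hj) _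
  have : (0:ℝ) < ∑ i, ‖z i‖ ^ q := by
    refine lt_of_lt_of_le hzj ?_
    exact Finset.single_le_sum (fun i _ => Real.rpow_nonneg (norm_nonneg _) _) (mem_univ j)
  exact Real.rpow_pos_of_pos this _

lemma norm21_pos' {M d : ℕ} {z : Fin M → EuclideanSpace ℝ (Fin d)}
    (hz : z ≠ 0) : 0 < norm21 z := by
  obtain ⟨j, hj⟩ := Function.ne_iff.mp hz
  exact lt_of_lt_of_le (norm_pos_iff.mpr hj)
    (Finset.single_le_sum (fun i _ => norm_nonneg _) (mem_univ j))

lemma mem_blockSupport' {M d : ℕ} {z : Fin M → EuclideanSpace ℝ (Fin d)} {j : Fin M} :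
    j ∈ blockSupport z ↔ z j ≠ 0 := by
  classical
  simp [blockSupport]

lemma holder_aux' {M d : ℕ} {q : ℝ} (hq : 1 < q) (S : Finset (Fin M))
    (v : Fin M → EuclideanSpace ℝ (Fin d)) :
    ∑ j ∈ S, ‖v j‖ ≤ (S.card : ℝ) ^ ((q-1)/q) * norm2q q v := by
  have hq0 : (0:ℝ) < q := lt_trans one_pos hq
  have hq1 : (0:ℝ) < q - 1 := sub_pos.mpr hq
  have hpq : (q/(q-1)).HolderConjugate q := (Real.HolderConjugate.conjExponent hq).symm
  have h1 := Real.inner_le_Lp_mul_Lq_of_nonneg S hpq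
      (f := fun _ : Fin M => (1:ℝ)) (g := fun j => ‖v j‖)
      (fun i _ => zero_le_one) (fun i _ => norm_nonneg _)
  simp only [one_mul, Real.one_rpow, Finset.sum_const, nsmul_eq_mul, mul_one] at h1
  have he : 1 / (q/(q-1)) = (q-1)/q := by
    rw [one_div_div]
  rw [he] at h1
  refine le_trans h1 (mul_le_mul_of_nonneg_left ?_ (Real.rpow_nonneg (Nat.cast_nonneg _) _))
  unfold norm2q
  exact Real.rpow_le_rpow (Finset.sum_nonneg fun i _ => Real.rpow_nonneg (norm_nonneg _) _)
    (Finset.sum_le_sum_of_subset_of_nonneg (subset_univ S)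
      (fun i _ _ => Real.rpow_nonneg (norm_nonneg _) _)) (one_div_nonneg.mpr hq0.le)

lemma minkowski_aux' {M d : ℕ} {q : ℝ} (hq : 1 ≤ q) (u v : Fin M → EuclideanSpace ℝ (Fin d)) :
    norm2q q (fun j => u j + v j) ≤ norm2q q u + norm2q q v := by
  have hq0 : (0:ℝ) < q := lt_of_lt_of_le one_pos hq
  have key := Real.Lp_add_le (univ : Finset (Fin M)) (fun j => ‖u j‖) (fun j => ‖v j‖) hq
  simp only [abs_of_nonneg (norm_nonneg _), abs_of_nonneg (add_nonneg (norm_nonneg _) (norm_nonneg _))] at key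
  refine le_trans ?_ key
  unfold norm2q
  exact Real.rpow_le_rpow (Finset.sum_nonneg fun j _ => Real.rpow_nonneg (norm_nonneg _) _)
    (Finset.sum_le_sum fun j _ => Real.rpow_le_rpow (norm_nonneg _) (norm_add_le _ _) hq0.le)
    (one_div_nonneg.mpr hq0.le)

end MainProof

/-- if k < inf over nonzero kernel vectors of 3^{q/(1-q)} k_q(h), then the
block k-sparse x is the unique minimizer of ‖z‖_{2,1}/‖z‖_{2,q} subject to Az = Ax. -/
theorem exact_recovery_sufficient_condition {m M d k : ℕ}
    (A : Matrix (Fin m) (Fin M × Fin d) ℝ)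
    (x : Fin M → EuclideanSpace ℝ (Fin d)) (hx : x ≠ 0)
    (hxs : (blockSupport x).card ≤ k) (q : ℝ) (hq : 1 < q)
    (hk : (k : ℝ) < sInf {t : ℝ | ∃ h : Fin M → EuclideanSpace ℝ (Fin d),
      mulB A h = 0 ∧ h ≠ 0 ∧ t = (3 : ℝ) ^ (q / (1 - q)) * kqs q h}) :
    ∀ z : Fin M → EuclideanSpace ℝ (Fin d), mulB A z = mulB A x → z ≠ x →
      norm21 x / norm2q q x < norm21 z / norm2q q z := by
  classical
  intro z hAz hzx
  by_contra hcon
  push_neg at hcon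
  have hq0 : (0:ℝ) < q := lt_trans one_pos hq
  have hq1 : (0:ℝ) < q - 1 := sub_pos.mpr hq
  set h : Fin M → EuclideanSpace ℝ (Fin d) := fun j => z j - x j with hh
  have hne : h ≠ 0 := by
    intro h0
    apply hzx
    funext j
    have := congrFun h0 j
    simpa [hh, sub_eq_zero] using this
  have hker : mulB A h = 0 := by
    ext i
    have : mulB A h i = mulB A z i - mulB A x i := by
      simp only [mulB, hh]
      rw [← Finset.sum_sub_distrib]
      refine Finset.sum_congr rfl fun p _ => ?_
      have : (z p.1 - x p.1) p.2 = z p.1 p.2 - x p.1 p.2 := rfl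
      rw [this, mul_sub]
    rw [hAz] at this
    simpa using this
  -- from the hypothesis, k < 3^{q/(1-q)} * kqs q h
  have hmem : (3 : ℝ) ^ (q / (1 - q)) * kqs q h ∈
      {t : ℝ | ∃ h : Fin M → EuclideanSpace ℝ (Fin d),
        mulB A h = 0 ∧ h ≠ 0 ∧ t = (3 : ℝ) ^ (q / (1 - q)) * kqs q h} :=
    ⟨h, hker, hne, rfl⟩
  have hbdd : BddBelow {t : ℝ | ∃ h : Fin M → EuclideanSpace ℝ (Fin d),
      mulB A h = 0 ∧ h ≠ 0 ∧ t = (3 : ℝ) ^ (q / (1 - q)) * kqs q h} := by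
    refine ⟨0, fun t ht => ?_⟩
    obtain ⟨w, -, -, rfl⟩ := ht
    exact mul_nonneg (Real.rpow_nonneg (by norm_num) _) (kqs_nonneg' q w)
  have hklt : (k : ℝ) < (3 : ℝ) ^ (q / (1 - q)) * kqs q h :=
    lt_of_lt_of_le hk (csInf_le hbdd hmem)
  -- notation
  set S := blockSupport x with hS
  have hXq : 0 < norm2q q x := norm2q_pos' hq0 hx
  have hHq : 0 < norm2q q h := norm2q_pos' hq0 hne
  set K : ℝ := (k : ℝ) ^ ((q-1)/q) with hK
  have hK0 : 0 ≤ K := Real.rpow_nonneg (Nat.cast_nonneg _) _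
  have hcard : ((S.card : ℝ)) ^ ((q-1)/q) ≤ K := by
    refine Real.rpow_le_rpow (Nat.cast_nonneg _) ?_ (by positivity)
    exact_mod_cast hxs
  -- Step A : norm21 x ≤ K * norm2q q x
  have hA : norm21 x ≤ K * norm2q q x := by
    have h1 : norm21 x = ∑ j ∈ S, ‖x j‖ := by
      rw [norm21]
      refine (Finset.sum_subset (Finset.subset_univ S) ?_).symm
      intro j _ hj
      have : x j = 0 := by
        by_contra hxj
        exact hj (mem_blockSupport'.mpr hxj)
      simp [this]
    rw [h1]
    refine le_trans (holder_aux' hq S x) ?_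
    exact mul_le_mul_of_nonneg_right hcard (norm2q_nonneg' q x)
  set ρ : ℝ := norm21 x / norm2q q x with hρ
  have hρK : ρ ≤ K := by
    rw [hρ, div_le_iff₀ hXq]
    exact hA
  have hρ0 : 0 ≤ ρ := div_nonneg (norm21_nonneg' x) (norm2q_nonneg' q x)
  -- Step C : ∑_{j∈S} ‖h j‖ ≤ K * norm2q q h
  have hC : ∑ j ∈ S, ‖h j‖ ≤ K * norm2q q h :=
    le_trans (holder_aux' hq S h) (mul_le_mul_of_nonneg_right hcard (norm2q_nonneg' q h))
  -- Step D : norm21 x + norm21 h - 2 * ∑_{j∈S} ‖h j‖ ≤ norm21 z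
  have hD : norm21 x + norm21 h - 2 * ∑ j ∈ S, ‖h j‖ ≤ norm21 z := by
    have key : ∀ j : Fin M, ‖x j‖ + ‖h j‖ - 2 * (if j ∈ S then ‖h j‖ else 0) ≤ ‖z j‖ := by
      intro j
      by_cases hjS : j ∈ S
      · simp only [hjS, if_true]
        have hz : z j = x j + h j := by simp [hh]
        have : ‖x j‖ ≤ ‖z j‖ + ‖h j‖ := by
          calc ‖x j‖ = ‖z j - h j‖ := by rw [hz]; congr 1; abel
          _ ≤ ‖z j‖ + ‖h j‖ := norm_sub_le _ _
        linarith
      · have hxj : x j = 0 := by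
          by_contra hxj
          exact hjS (mem_blockSupport'.mpr hxj)
        have hz : h j = z j := by simp [hh, hxj]
        simp [hxj, hjS, hz]
    have := Finset.sum_le_sum (fun j (_ : j ∈ (Finset.univ : Finset (Fin M))) => key j)
    rw [show ∑ j, (‖x j‖ + ‖h j‖ - 2 * (if j ∈ S then ‖h j‖ else 0))
        = norm21 x + norm21 h - 2 * ∑ j ∈ S, ‖h j‖ from ?_] at this
    · exact this
    · rw [Finset.sum_sub_distrib, Finset.sum_add_distrib, ← Finset.mul_sum,
        Finset.sum_ite_mem, Finset.univ_inter]
      rfl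
  -- Step E : norm21 z ≤ ρ * norm2q q z
  have hE : norm21 z ≤ ρ * norm2q q z := by
    by_cases hz0 : z = 0
    · have h0 : norm21 z = 0 := by simp [hz0, norm21]
      rw [h0]
      exact mul_nonneg hρ0 (norm2q_nonneg' q z)
    · have hZq : 0 < norm2q q z := norm2q_pos' hq0 hz0
      exact (div_le_iff₀ hZq).mp hcon
  -- Step F : norm2q q z ≤ norm2q q x + norm2q q h
  have hF : norm2q q z ≤ norm2q q x + norm2q q h := by
    have hz : z = fun j => x j + h j := by funext j; simp [hh]
    rw [hz]
    exact minkowski_aux' hq.le x h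
  -- Combine : norm21 h ≤ 3 * K * norm2q q h
  have hcomb : norm21 h ≤ 3 * K * norm2q q h := by
    have e1 : ρ * norm2q q x = norm21 x := by
      rw [hρ, div_mul_cancel₀]
      exact ne_of_gt hXq
    have e2 : norm21 z ≤ norm21 x + ρ * norm2q q h := by
      calc norm21 z ≤ ρ * norm2q q z := hE
        _ ≤ ρ * (norm2q q x + norm2q q h) := by
            exact mul_le_mul_of_nonneg_left hF hρ0
        _ = norm21 x + ρ * norm2q q h := by rw [mul_add, e1]
    have e3 : ρ * norm2q q h ≤ K * norm2q q h :=
      mul_le_mul_of_nonneg_right hρK hHq.le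
    nlinarith [hD, hC, e2, e3]
  -- conclude : 3^{q/(1-q)} * kqs q h ≤ k, contradiction
  have hfinal : (3 : ℝ) ^ (q / (1 - q)) * kqs q h ≤ (k : ℝ) := by
    have h3H : (0:ℝ) < 3 * norm2q q h := by linarith
    have step1 : norm21 h / (3 * norm2q q h) ≤ K := by
      rw [div_le_iff₀ h3H]
      calc norm21 h ≤ 3 * K * norm2q q h := hcomb
        _ = K * (3 * norm2q q h) := by ring
    have hnn : 0 ≤ norm21 h / (3 * norm2q q h) :=
      div_nonneg (norm21_nonneg' h) h3H.le
    have step2 : (norm21 h / (3 * norm2q q h)) ^ (q/(q-1)) ≤ K ^ (q/(q-1)) :=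
      Real.rpow_le_rpow hnn step1 (by positivity)
    have hKk : K ^ (q/(q-1)) = (k : ℝ) := by
      rw [hK, ← Real.rpow_mul (Nat.cast_nonneg k)]
      rw [show (q-1)/q * (q/(q-1)) = 1 by field_simp]
      exact Real.rpow_one _
    have hlhs : (norm21 h / (3 * norm2q q h)) ^ (q/(q-1))
        = (3 : ℝ) ^ (q / (1 - q)) * kqs q h := by
      have hsplit : norm21 h / (3 * norm2q q h) = (norm21 h / norm2q q h) / 3 := by
        rw [div_div, mul_comm]
      have hexp : q / (1 - q) = -(q / (q - 1)) := by
        rw [show (1 - q) = -(q - 1) by ring, div_neg]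
      rw [hsplit, Real.div_rpow (div_nonneg (norm21_nonneg' h) (norm2q_nonneg' q h))
        (by norm_num : (0:ℝ) ≤ 3), hexp, Real.rpow_neg (by norm_num : (0:ℝ) ≤ 3)]
      unfold kqs
      rw [div_eq_mul_inv, mul_comm]
    rw [← hlhs, ← hKk]
    exact step2
  exact absurd hfinal (not_le.mpr hklt)
end

section
/- Let q ∈ (1,∞), x block k-sparse with support S, κ ∈ (0,1), and h ∈ ℝ^N nonzero. If ‖x‖_{2,1} − ‖h_S‖_{2,1} + ‖h_{S^c}‖_{2,1} ≤ κ‖h‖_{2,1} + ‖x‖_{2,1} + k^{1−1/q}‖h‖_{2,q}, then k_q(h) ≤ (3/(1−κ))^{q/(q−1)} k. -/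
lemma norm21_restrict {M d : ℕ} (S : Finset (Fin M)) (h : Fin M → EuclideanSpace ℝ (Fin d)) :
    norm21 (restrictS S h) = ∑ j ∈ S, ‖h j‖ := by
  unfold norm21 restrictS
  have : ∀ j, ‖if j ∈ S then h j else 0‖ = if j ∈ S then ‖h j‖ else 0 := by
    intro j; split <;> simp
  simp_rw [this]
  rw [Finset.sum_ite_mem, Finset.univ_inter]


/-- cone bound with parameter κ for the unconstrained model. -/
theorem cone_bound_kappa {M d k : ℕ} (q : ℝ) (hq : 1 < q)
    (κ : ℝ) (hκ0 : 0 < κ) (hκ1 : κ < 1)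
    (S : Finset (Fin M)) (hS : S.card ≤ k)
    (x h : Fin M → EuclideanSpace ℝ (Fin d)) (hx : x ≠ 0)
    (hxsupp : ∀ j ∉ S, x j = 0) (hh : h ≠ 0)
    (hineq : norm21 x - norm21 (restrictS S h) + norm21 (restrictS Sᶜ h) ≤
      κ * norm21 h + norm21 x + (k : ℝ) ^ (1 - 1 / q) * norm2q q h) :
    kqs q h ≤ (3 / (1 - κ)) ^ (q / (q - 1)) * (k : ℝ) := by
  have hq0 : (0:ℝ) < q := by linarith
  set A := norm21 h with hA
  set B := norm2q q h with hB
  set c : ℝ := (k : ℝ) ^ (1 - 1 / q) with hc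
  -- B > 0
  have hBpos : 0 < B := by
    obtain ⟨j, hj⟩ : ∃ j, h j ≠ 0 := by
      by_contra hcon; push_neg at hcon; exact hh (funext hcon)
    have h1 : (0:ℝ) < ‖h j‖ ^ q := Real.rpow_pos_of_pos (norm_pos_iff.mpr hj) q
    have h2 : (0:ℝ) < ∑ i, ‖h i‖ ^ q := by
      refine Finset.sum_pos' (fun i _ => Real.rpow_nonneg (norm_nonneg _) q) ⟨j, Finset.mem_univ j, h1⟩
    exact Real.rpow_pos_of_pos h2 _
  -- split A
  have hsplit : A = norm21 (restrictS S h) + norm21 (restrictS Sᶜ h) := by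
    rw [norm21_restrict, norm21_restrict, hA]
    unfold norm21
    rw [← Finset.sum_filter_add_sum_filter_not Finset.univ (fun j => j ∈ S)]
    congr 1
    · simp [Finset.filter_mem_eq_inter]
    · apply Finset.sum_congr _ (fun _ _ => rfl)
      ext j; simp
  -- Hölder: ‖h_S‖_{2,1} ≤ card^{1-1/q} (sum)^{1/q} ≤ c * B
  have hholder : norm21 (restrictS S h) ≤ c * B := by
    rw [norm21_restrict]
    have := Real.inner_le_weight_mul_Lp_of_nonneg S (le_of_lt hq) (fun _ => (1:ℝ))
      (fun j => ‖h j‖) (fun _ => zero_le_one) (fun j => norm_nonneg _)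
    simp only [one_mul, Finset.sum_const, nsmul_eq_mul, mul_one] at this
    refine this.trans ?_
    have h1 : (S.card : ℝ) ^ (1 - q⁻¹) ≤ c := by
      rw [hc, one_div]
      exact Real.rpow_le_rpow (by positivity) (Nat.cast_le.mpr hS)
        (by rw [sub_nonneg, inv_le_one_iff₀]; right; linarith)
    have h2 : (∑ j ∈ S, ‖h j‖ ^ q) ^ q⁻¹ ≤ B := by
      rw [hB]; unfold norm2q
      rw [one_div]
      refine Real.rpow_le_rpow (Finset.sum_nonneg fun i _ => Real.rpow_nonneg (norm_nonneg _) q)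
        (Finset.sum_le_sum_of_subset_of_nonneg (Finset.subset_univ S)
          (fun i _ _ => Real.rpow_nonneg (norm_nonneg _) q)) (by positivity)
    exact mul_le_mul h1 h2 (by positivity) (by positivity)
  -- main inequality
  have hmain : (1 - κ) * A ≤ 3 * c * B := by
    have h1 : norm21 (restrictS Sᶜ h) - norm21 (restrictS S h) ≤ κ * A + c * B := by linarith
    nlinarith [hsplit, hholder]
  -- ratio bound
  have hratio : A / B ≤ 3 / (1 - κ) * c := by
    rw [div_le_iff₀ hBpos]
    rw [div_mul_eq_mul_div, div_mul_eq_mul_div, le_div_iff₀ (by linarith : (0:ℝ) < 1 - κ)]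
    nlinarith
  -- conclude
  have hk1 : 1 ≤ k := by
    obtain ⟨j, hj⟩ : ∃ j, x j ≠ 0 := by
      by_contra hcon; push_neg at hcon; exact hx (funext hcon)
    have : j ∈ S := by by_contra hjS; exact hj (hxsupp j hjS)
    calc 1 ≤ S.card := Finset.card_pos.mpr ⟨j, this⟩
      _ ≤ k := hS
  have hexp : 0 ≤ q / (q - 1) := div_nonneg (by linarith) (by linarith)
  have hAB0 : 0 ≤ A / B := by
    apply div_nonneg _ (le_of_lt hBpos)
    exact Finset.sum_nonneg fun i _ => norm_nonneg _
  have hfin : (A / B) ^ (q / (q - 1)) ≤ (3 / (1 - κ) * c) ^ (q / (q - 1)) :=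
    Real.rpow_le_rpow hAB0 hratio hexp
  unfold kqs
  rw [← hA, ← hB]
  refine hfin.trans ?_
  rw [Real.mul_rpow (div_nonneg (by norm_num) (by linarith)) (Real.rpow_nonneg (Nat.cast_nonneg k) _),
    ← Real.rpow_mul (Nat.cast_nonneg k)]
  have hq1 : q - 1 ≠ 0 := by linarith
  have hq2 : q ≠ 0 := by linarith
  have heq1 : (1 - 1 / q) * (q / (q - 1)) = 1 := by
    field_simp
  rw [heq1, Real.rpow_one]
end

section
/- Let x̂ minimize over z ∈ ℝ^N the objective (1/2)‖y − Az‖_2² + λ‖z‖_{2,1}/‖z‖_{2,q} with λ > 0, where y = Ax + ε and x is block k-sparse with q ∈ (1,∞). Then ‖x̂‖_{2,1}/‖x̂‖_{2,q} ≤ ‖ε‖_2²/(2λ) + k^{1−1/q}. -/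
/-- a minimizer of the unconstrained objective has bounded q-ratio. -/
theorem unconstrained_minimizer_ratio_bound {m M d k : ℕ}
    (A : Matrix (Fin m) (Fin M × Fin d) ℝ) (q : ℝ) (hq : 1 < q)
    (x : Fin M → EuclideanSpace ℝ (Fin d)) (hx : x ≠ 0)
    (hxs : (blockSupport x).card ≤ k)
    (lam : ℝ) (hlam : 0 < lam)
    (ε : EuclideanSpace ℝ (Fin m))
    (y : EuclideanSpace ℝ (Fin m)) (hy : y = mulB A x + ε)
    (xhat : Fin M → EuclideanSpace ℝ (Fin d)) (hxhat : xhat ≠ 0)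
    (hmin : ∀ z : Fin M → EuclideanSpace ℝ (Fin d),
      (1 / 2) * ‖y - mulB A xhat‖ ^ 2 + lam * (norm21 xhat / norm2q q xhat) ≤
        (1 / 2) * ‖y - mulB A z‖ ^ 2 + lam * (norm21 z / norm2q q z)) :
    norm21 xhat / norm2q q xhat ≤ ‖ε‖ ^ 2 / (2 * lam) + (k : ℝ) ^ (1 - 1 / q) := by
  classical
  have hq0 : 0 < q := lt_trans one_pos hq
  -- the key sparsity bound: norm21 x / norm2q q x ≤ k ^ (1 - 1/q)
  set S := blockSupport x with hS
  have hSmem : ∀ j, j ∉ S → ‖x j‖ = 0 := by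
    intro j hj
    simp only [hS, blockSupport, Finset.mem_filter, Finset.mem_univ, true_and,
      not_not] at hj
    simp [hj]
  have hpq : Real.HolderConjugate (q / (q - 1)) q :=
    (Real.HolderConjugate.conjExponent hq).symm
  have hholder := Real.inner_le_Lp_mul_Lq S (fun _ => (1 : ℝ)) (fun j => ‖x j‖) hpq
  have h21 : norm21 x = ∑ j ∈ S, ‖x j‖ := by
    rw [norm21, ← Finset.sum_subset (Finset.subset_univ S)]
    intro j _ hj; exact hSmem j hj
  have hcard : (∑ j ∈ S, |(1 : ℝ)| ^ (q / (q - 1))) = (S.card : ℝ) := by simp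
  have hle1 : (∑ j ∈ S, |‖x j‖| ^ q) ≤ ∑ j, ‖x j‖ ^ q := by
    rw [show (∑ j ∈ S, |‖x j‖| ^ q) = ∑ j ∈ S, ‖x j‖ ^ q by
      refine Finset.sum_congr rfl fun j _ => by rw [abs_norm]]
    refine Finset.sum_le_sum_of_subset_of_nonneg (Finset.subset_univ S) ?_
    intro j _ _; exact Real.rpow_nonneg (norm_nonneg _) _
  have hq2pos : 0 < norm2q q x := by
    obtain ⟨j, hj⟩ : ∃ j, x j ≠ 0 := by
      by_contra h
      push_neg at h
      exact hx (funext h)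
    have : 0 < ∑ j, ‖x j‖ ^ q := by
      refine Finset.sum_pos' (fun i _ => Real.rpow_nonneg (norm_nonneg _) _)
        ⟨j, Finset.mem_univ j, Real.rpow_pos_of_pos (norm_pos_iff.mpr hj) q⟩
    exact Real.rpow_pos_of_pos this _
  have hrpowle : (∑ j ∈ S, |‖x j‖| ^ q) ^ (1 / q) ≤ norm2q q x := by
    rw [norm2q]
    refine Real.rpow_le_rpow ?_ hle1 (by positivity)
    exact Finset.sum_nonneg fun j _ => Real.rpow_nonneg (abs_nonneg _) _
  have hconj : 1 / (q / (q - 1)) = 1 - 1 / q := by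
    field_simp
  have hxbound : norm21 x ≤ (S.card : ℝ) ^ (1 - 1 / q) * norm2q q x := by
    calc norm21 x = ∑ j ∈ S, (1 : ℝ) * ‖x j‖ := by rw [h21]; simp
      _ ≤ (∑ j ∈ S, |(1 : ℝ)| ^ (q / (q - 1))) ^ (1 / (q / (q - 1))) *
            (∑ j ∈ S, |‖x j‖| ^ q) ^ (1 / q) := hholder
      _ ≤ (S.card : ℝ) ^ (1 - 1 / q) * norm2q q x := by
          rw [hcard, hconj]
          exact mul_le_mul_of_nonneg_left hrpowle (Real.rpow_nonneg (Nat.cast_nonneg _) _)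
  have hkx : norm21 x / norm2q q x ≤ (k : ℝ) ^ (1 - 1 / q) := by
    rw [div_le_iff₀ hq2pos]
    refine le_trans hxbound (mul_le_mul_of_nonneg_right ?_ (le_of_lt hq2pos))
    exact Real.rpow_le_rpow (Nat.cast_nonneg _) (Nat.cast_le.mpr hxs) (by
      have := hq.le
      have : 0 ≤ 1 - 1 / q := by
        rw [sub_nonneg]
        exact div_le_one_of_le₀ hq.le hq0.le
      exact this)
  -- use the minimizer property at z = x
  have hminx := hmin x
  have hyx : y - mulB A x = ε := by rw [hy]; abel
  rw [hyx] at hminx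
  have hdrop : lam * (norm21 xhat / norm2q q xhat) ≤
      (1 / 2) * ‖ε‖ ^ 2 + lam * (norm21 x / norm2q q x) := by
    nlinarith [sq_nonneg ‖y - mulB A xhat‖, hminx]
  have : lam * (norm21 xhat / norm2q q xhat) ≤
      (1 / 2) * ‖ε‖ ^ 2 + lam * ((k : ℝ) ^ (1 - 1 / q)) :=
    le_trans hdrop (by nlinarith [hkx, hlam])
  rw [show ‖ε‖ ^ 2 / (2 * lam) + (k : ℝ) ^ (1 - 1 / q)
      = ((1 / 2) * ‖ε‖ ^ 2 + lam * ((k : ℝ) ^ (1 - 1 / q))) / lam by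
    field_simp]
  rw [le_div_iff₀ hlam]
  linarith [this]
end
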